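/- Let (S,w) be a hereditary 2-3-Set Packing instance, A a solution with no local improvement of size at most 10, B an optimum solution, A ∩ B = ∅, and C, B_1, B_2 defined via the first weight-distribution step. Then no set u ∈ A receives strictly more than w(u) in the first step; i.e., the total weight sent to u by sets of B_1 with unique A-neighbor u and by edges from B_2 incident to u is at most w(u). -/

import Mathlib

open scoped Classical

namespace SetPacking

variable {α : Type*}

/-- Weight of a set: `|s| - 1` (so 1 for 2-element sets and 2 for 3-element sets). -/
noncomputable def wt (s : Finset α) : ℕ := s.card - 1

/-- Total weight of a collection of sets. -/
noncomputable def wsum (X : Finset (Finset α)) : ℕ := ∑ s ∈ X, wt s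

/-- `N(X, A)`: the sets of `A` intersecting some member of `X` (this includes `X ∩ A`
when the sets involved are nonempty). -/
noncomputable def nbhd (X A : Finset (Finset α)) : Finset (Finset α) :=
  A.filter (fun a => ∃ x ∈ X, (x ∩ a).Nonempty)

/-- A sub-collection consisting of pairwise disjoint sets. -/
def PairwiseDisjointSets (X : Finset (Finset α)) : Prop :=
  ∀ x ∈ X, ∀ y ∈ X, x ≠ y → x ∩ y = ∅

/-- `X` is a local improvement of `A`: a disjoint sub-collection with
`w(X) > w(N(X, A))`, or equal weight and strictly more weight-2 (i.e. 3-element)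
sets in `X` than in `N(X, A)`. -/
def IsLocalImprovement (A X : Finset (Finset α)) : Prop :=
  PairwiseDisjointSets X ∧
    (wsum (nbhd X A) < wsum X ∨
      (wsum X = wsum (nbhd X A) ∧
        ((nbhd X A).filter (fun s => s.card = 3)).card
          < (X.filter (fun s => s.card = 3)).card))

/-- `B₁`: the sets of `B` with exactly one neighbor in `A` (in the conflict graph). -/
noncomputable def B1 (A B : Finset (Finset α)) : Finset (Finset α) :=
  B.filter (fun v => (A.filter (fun a => (v ∩ a).Nonempty)).card = 1)

/-- `B₂`: the weight-2 sets of `B` with exactly two incident edges in the multigraph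
conflict graph (that is, `∑_{a ∈ A} |v ∩ a| = 2`), connecting to two distinct sets
of `A`. -/
noncomputable def B2 (A B : Finset (Finset α)) : Finset (Finset α) :=
  B.filter (fun v => v.card = 3 ∧ (∑ a ∈ A, (v ∩ a).card) = 2 ∧
    (A.filter (fun a => (v ∩ a).Nonempty)).card = 2)

/-- The total amount of weight that `u` receives in the first distribution step:
each `v ∈ B₁` sends its weight `wt v` to its unique neighbor in `A`, and each
`v ∈ B₂` sends 1 along each of its two edges (one unit to each of its two
distinct neighbors in `A`). -/
noncomputable def received (A B : Finset (Finset α)) (u : Finset α) : ℕ :=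
  (∑ v ∈ (B1 A B).filter (fun v => (v ∩ u).Nonempty), wt v) +
    ((B2 A B).filter (fun v => (v ∩ u).Nonempty)).card

/-- `C`: the sets of `A` receiving exactly their own weight in the first step. -/
noncomputable def Cset (A B : Finset (Finset α)) : Finset (Finset α) :=
  A.filter (fun u => received A B u = wt u)

end SetPacking

/-!
If `u ∈ A` received more than `wt u`, shrink every sender `v` of `u` to a set whose only
`A`-neighbor is `u` and whose weight is exactly what `v` sent: a set of `B₁` stays as it is,
while a set `v ∈ B₂` has three points but only two edges, so one of its points lies in no set
of `A`; with a point of `v ∩ u` it forms a pair, which is in `S` by heredity. The shrunk sets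
lie inside distinct disjoint sets of `B`, so they are disjoint, each meets `u`, and hence there
are at most `|u| ≤ 3` of them; their total weight is `received A B u > wt u`, which bounds the
weight of their neighborhood `⊆ {u}`. That is a local improvement of size at most 3.
-/

open Finset

namespace SetPacking

variable {α : Type*}

namespace PairwiseDisjointSets

variable {X : Finset (Finset α)}

theorem eq_of_inter_nonempty (hX : PairwiseDisjointSets X) {x y : Finset α} (hx : x ∈ X)
    (hy : y ∈ X) (hxy : (x ∩ y).Nonempty) : x = y := by
  by_contra hne
  exact hxy.ne_empty (hX x hx y hy hne)

theorem subset {Y : Finset (Finset α)} (hX : PairwiseDisjointSets X) (hYX : Y ⊆ X) :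
    PairwiseDisjointSets Y :=
  fun x hx y hy => hX x (hYX hx) y (hYX hy)

theorem image_of_subset (hX : PairwiseDisjointSets X) {f : Finset α → Finset α}
    (hf : ∀ x ∈ X, f x ⊆ x) : PairwiseDisjointSets (X.image f) := by
  simp only [PairwiseDisjointSets, mem_image]
  rintro _ ⟨x, hx, rfl⟩ _ ⟨y, hy, rfl⟩ hne
  have hxy : x ∩ y = ∅ := hX x hx y hy fun h => hne (h ▸ rfl)
  exact subset_empty.1 (hxy ▸ inter_subset_inter (hf x hx) (hf y hy))

theorem injOn_of_subset (hX : PairwiseDisjointSets X) {f : Finset α → Finset α}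
    (hf : ∀ x ∈ X, f x ⊆ x) (hne : ∀ x ∈ X, (f x).Nonempty) : Set.InjOn f X := by
  intro x hx y hy hxy
  obtain ⟨z, hz⟩ := hne x hx
  exact hX.eq_of_inter_nonempty hx hy ⟨z, mem_inter.2 ⟨hf x hx hz, hf y hy (hxy ▸ hz)⟩⟩

theorem card_le_of_forall_inter_nonempty (hX : PairwiseDisjointSets X) {u : Finset α}
    (hXu : ∀ x ∈ X, (x ∩ u).Nonempty) : X.card ≤ u.card := by
  have hdisj : (X : Set (Finset α)).PairwiseDisjoint (· ∩ u) := by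
    intro x hx y hy hne
    rw [Function.onFun, disjoint_iff_inter_eq_empty, ← subset_empty, ← hX x hx y hy hne]
    exact inter_subset_inter inter_subset_left inter_subset_left
  calc X.card ≤ (X.biUnion (· ∩ u)).card := card_le_card_biUnion hdisj hXu
    _ ≤ u.card := card_le_card (biUnion_subset.2 fun _ _ => inter_subset_right)

end PairwiseDisjointSets

theorem isLocalImprovement_of_forall_inter_nonempty {A X : Finset (Finset α)} {u : Finset α}
    (hX : PairwiseDisjointSets X) (hXA : ∀ x ∈ X, ∀ a ∈ A, (x ∩ a).Nonempty → a = u)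
    (hlt : wt u < wsum X) : IsLocalImprovement A X := by
  have hN : nbhd X A ⊆ {u} := fun a ha => by
    obtain ⟨ha, x, hx, hxa⟩ := mem_filter.1 ha
    exact mem_singleton.2 (hXA x hx a ha hxa)
  refine ⟨hX, Or.inl (lt_of_le_of_lt ?_ hlt)⟩
  calc wsum (nbhd X A) ≤ wsum {u} := sum_le_sum_of_subset hN
    _ = wt u := sum_singleton _ _

theorem exists_mem_forall_notMem_of_sum_card_inter_lt {A : Finset (Finset α)} {v : Finset α}
    (h : ∑ a ∈ A, (v ∩ a).card < v.card) : ∃ e ∈ v, ∀ a ∈ A, e ∉ a := by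
  by_contra! hcov
  have hsub : v ⊆ A.biUnion (v ∩ ·) := fun e he => by
    obtain ⟨a, ha, hea⟩ := hcov e he
    exact mem_biUnion.2 ⟨a, ha, mem_inter.2 ⟨he, hea⟩⟩
  exact (card_le_card hsub |>.trans card_biUnion_le).not_gt h

variable {A B : Finset (Finset α)} {u : Finset α}

theorem disjoint_B1_B2 : Disjoint (B1 A B) (B2 A B) := by
  rw [disjoint_left]
  intro v h1 h2
  have := (mem_filter.1 h1).2
  have := (mem_filter.1 h2).2.2.2
  omega

theorem eq_of_mem_B1_of_inter_nonempty {v a : Finset α} (hv : v ∈ B1 A B) (hu : u ∈ A)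
    (hvu : (v ∩ u).Nonempty) (ha : a ∈ A) (hva : (v ∩ a).Nonempty) : a = u := by
  obtain ⟨b, hb⟩ := card_eq_one.1 (mem_filter.1 hv).2
  have hau : a ∈ A.filter (fun a => (v ∩ a).Nonempty) := mem_filter.2 ⟨ha, hva⟩
  have huu : u ∈ A.filter (fun a => (v ∩ a).Nonempty) := mem_filter.2 ⟨hu, hvu⟩
  rw [hb, mem_singleton] at hau huu
  rw [hau, huu]

theorem exists_pair_of_mem_B2 (hA : PairwiseDisjointSets A) (hu : u ∈ A) {v : Finset α}
    (hv : v ∈ B2 A B) (hvu : (v ∩ u).Nonempty) :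
    ∃ t ⊆ v, t.card = 2 ∧ (t ∩ u).Nonempty ∧ ∀ a ∈ A, (t ∩ a).Nonempty → a = u := by
  obtain ⟨-, hcard, hsum, -⟩ := mem_filter.1 hv
  obtain ⟨e, hev, heA⟩ := exists_mem_forall_notMem_of_sum_card_inter_lt (A := A) (v := v)
    (by omega)
  obtain ⟨p, hp⟩ := hvu
  obtain ⟨hpv, hpu⟩ := mem_inter.1 hp
  have hpe : p ≠ e := fun h => heA u hu (h ▸ hpu)
  refine ⟨{p, e}, insert_subset hpv (singleton_subset_iff.2 hev), card_pair hpe,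
    ⟨p, by simp [hpu]⟩, fun a ha ⟨x, hx⟩ => ?_⟩
  obtain ⟨hx, hxa⟩ := mem_inter.1 hx
  rcases mem_insert.1 hx with rfl | hx
  · exact hA.eq_of_inter_nonempty ha hu ⟨x, mem_inter.2 ⟨hxa, hpu⟩⟩
  · exact absurd (mem_singleton.1 hx ▸ hxa) (heA a ha)

variable (A B u) in
noncomputable def senders : Finset (Finset α) :=
  (B1 A B ∪ B2 A B).filter (fun v => (v ∩ u).Nonempty)

theorem senders_subset : senders A B u ⊆ B := fun v hv => by
  rcases mem_union.1 (mem_filter.1 hv).1 with h | h <;> exact (mem_filter.1 h).1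

theorem received_eq_sum_senders :
    received A B u = ∑ v ∈ senders A B u, if v ∈ B1 A B then wt v else 1 := by
  rw [senders, filter_union, sum_union (disjoint_filter_filter disjoint_B1_B2), received,
    card_eq_sum_ones]
  congr 1
  · exact sum_congr rfl fun v hv => (if_pos (mem_filter.1 hv).1).symm
  · exact sum_congr rfl fun v hv =>
      (if_neg (disjoint_right.1 disjoint_B1_B2 (mem_filter.1 hv).1)).symm

theorem exists_subset_of_mem_senders {S : Finset (Finset α)}
    (hher : ∀ s ∈ S, s.card = 3 → ∀ t ⊆ s, t.card = 2 → t ∈ S) (hBS : B ⊆ S)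
    (hA : PairwiseDisjointSets A) (hu : u ∈ A) {v : Finset α} (hv : v ∈ senders A B u) :
    ∃ t ⊆ v, t ∈ S ∧ (t ∩ u).Nonempty ∧ (∀ a ∈ A, (t ∩ a).Nonempty → a = u) ∧
      wt t = if v ∈ B1 A B then wt v else 1 := by
  obtain ⟨hv12, hvu⟩ := mem_filter.1 hv
  have hvS := hBS (senders_subset hv)
  by_cases h1 : v ∈ B1 A B
  · rw [if_pos h1]
    exact ⟨v, subset_rfl, hvS, hvu,
      fun a ha => eq_of_mem_B1_of_inter_nonempty h1 hu hvu ha, rfl⟩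
  · have h2 : v ∈ B2 A B := (mem_union.1 hv12).resolve_left h1
    obtain ⟨t, htv, htcard, htu, htA⟩ := exists_pair_of_mem_B2 hA hu h2 hvu
    rw [if_neg h1]
    exact ⟨t, htv, hher v hvS (mem_filter.1 h2).2.1 t htv htcard, htu, htA, by rw [wt, htcard]⟩

end SetPacking

open SetPacking

theorem first_step_at_most_own_weight_general {α : Type*} (S A B : Finset (Finset α))
    (hcards : ∀ s ∈ S, s.card = 2 ∨ s.card = 3)
    (hher : ∀ s ∈ S, s.card = 3 → ∀ t ⊆ s, t.card = 2 → t ∈ S)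
    (hAS : A ⊆ S) (hBS : B ⊆ S)
    (hAdisj : PairwiseDisjointSets A) (hBdisj : PairwiseDisjointSets B)
    (hnoimp : ∀ X ⊆ S, X.card ≤ 10 → ¬ IsLocalImprovement A X) :
    ∀ u ∈ A, received A B u ≤ wt u := by
  intro u hu
  by_contra! hgt
  choose! f hsub hS hmeet honly hwt using fun v (hv : v ∈ senders A B u) =>
    exists_subset_of_mem_senders hher hBS hAdisj hu hv
  have hY := hBdisj.subset (senders_subset (A := A) (u := u))
  have hX := hY.image_of_subset hsub
  have hwsum : wsum ((senders A B u).image f) = received A B u := by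
    have hinj := hY.injOn_of_subset hsub fun v hv => (hmeet v hv).mono inter_subset_left
    rw [wsum, sum_image hinj, received_eq_sum_senders]
    exact sum_congr rfl hwt
  have hcard : ((senders A B u).image f).card ≤ 3 := by
    have := hX.card_le_of_forall_inter_nonempty (forall_mem_image.2 hmeet)
    have := hcards u (hAS hu)
    omega
  exact hnoimp _ (image_subset_iff.2 hS) (hcard.trans (by norm_num))
    (isLocalImprovement_of_forall_inter_nonempty hX (forall_mem_image.2 honly) (hwsum ▸ hgt))

/-- Hereditary 2-3-Set Packing instance `S`, solution `A` with no
local improvement of size at most 10, optimum solution `B`, `A ∩ B = ∅`.  Then no set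
`u ∈ A` receives strictly more than its own weight `wt u` in the first
weight-distribution step. -/
theorem first_step_at_most_own_weight {α : Type*} (S A B : Finset (Finset α))
    (hcards : ∀ s ∈ S, s.card = 2 ∨ s.card = 3)
    (hher : ∀ s ∈ S, s.card = 3 → ∀ t ⊆ s, t.card = 2 → t ∈ S)
    (hAS : A ⊆ S) (hBS : B ⊆ S)
    (hAdisj : PairwiseDisjointSets A) (hBdisj : PairwiseDisjointSets B)
    (hAB : Disjoint A B)
    (hBopt : ∀ X ⊆ S, PairwiseDisjointSets X → wsum X ≤ wsum B)
    (hnoimp : ∀ X ⊆ S, X.card ≤ 10 → ¬ IsLocalImprovement A X) :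
    ∀ u ∈ A, received A B u ≤ wt u :=
  first_step_at_most_own_weight_general S A B hcards hher hAS hBS hAdisj hBdisj hnoimp
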